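/- Let h ∈ ℝ^d, W_T ∈ ℝ^{d'×d}, b_T ∈ ℝ^{d'}, W_C ∈ ℝ^{d'×k}, let g ∈ ℝ^k and η ∈ ℝ, and define the gradient-step increments Δb_T = η W_C g and ΔW_C = η (W_T h + b_T) g^⊤. If W_C^⊤ W_C = I_k (the k×k identity matrix) and b_T is orthogonal to W_T h + b_T (i.e. (W_T h + b_T)^⊤ b_T = 0), then the induced first-order change of the composite bias b_{C'} = W_C^⊤ b_T satisfies W_C^⊤ Δb_T + (ΔW_C)^⊤ b_T = η g, which coincides with the gradient update η ∇_{C'} L of the bias of a single linear classifier. -/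

import Mathlib

open Matrix

section

variable {R m n : Type*} [CommSemiring R] [Fintype m]

theorem transpose_mulVec_smul_mulVec_of_transpose_mul_self_eq_one [Fintype n] [DecidableEq n]
    {W : Matrix m n R} (hW : Wᵀ * W = 1) (η : R) (v : n → R) :
    Wᵀ *ᵥ (η • W *ᵥ v) = η • v := by
  rw [mulVec_smul, mulVec_mulVec, hW, one_mulVec]

theorem transpose_smul_vecMulVec_mulVec_of_dotProduct_eq_zero {u w : m → R}
    (huw : u ⬝ᵥ w = 0) (η : R) (v : n → R) :
    (η • vecMulVec u v)ᵀ *ᵥ w = 0 := by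
  rw [transpose_smul, transpose_vecMulVec, smul_mulVec, vecMulVec_mulVec, huw]
  simp

end

theorem stmt_11_general (d d' k : ℕ)
    (h : Fin d → ℝ) (WT : Matrix (Fin d') (Fin d) ℝ) (bT : Fin d' → ℝ)
    (WC : Matrix (Fin d') (Fin k) ℝ) (g : Fin k → ℝ) (η : ℝ)
    (ΔbT : Fin d' → ℝ) (hΔbT : ΔbT = η • WC.mulVec g)
    (ΔWC : Matrix (Fin d') (Fin k) ℝ)
    (hΔWC : ΔWC = η • Matrix.vecMulVec (WT.mulVec h + bT) g)
    (horthonormal : WCᵀ * WC = 1)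
    (horth : (WT.mulVec h + bT) ⬝ᵥ bT = 0) :
    WCᵀ.mulVec ΔbT + ΔWCᵀ.mulVec bT = η • g := by
  subst hΔbT hΔWC
  rw [transpose_mulVec_smul_mulVec_of_transpose_mul_self_eq_one horthonormal,
    transpose_smul_vecMulVec_mulVec_of_dotProduct_eq_zero horth, add_zero]

/-- With `Δb_T = η W_C g` and `ΔW_C = η (W_T h + b_T) gᵀ`, if `W_Cᵀ W_C = I_k` and
`b_T ⟂ (W_T h + b_T)`, then the induced first-order change of the composite bias
satisfies `W_Cᵀ Δb_T + (ΔW_C)ᵀ b_T = η g`. -/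
theorem stmt_11 (d d' k : ℕ) (hd : 0 < d) (hd' : 0 < d') (hk : 0 < k)
    (h : Fin d → ℝ) (WT : Matrix (Fin d') (Fin d) ℝ) (bT : Fin d' → ℝ)
    (WC : Matrix (Fin d') (Fin k) ℝ) (g : Fin k → ℝ) (η : ℝ)
    (ΔbT : Fin d' → ℝ) (hΔbT : ΔbT = η • WC.mulVec g)
    (ΔWC : Matrix (Fin d') (Fin k) ℝ)
    (hΔWC : ΔWC = η • Matrix.vecMulVec (WT.mulVec h + bT) g)
    (horthonormal : WCᵀ * WC = 1)
    (horth : (WT.mulVec h + bT) ⬝ᵥ bT = 0) :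
    WCᵀ.mulVec ΔbT + ΔWCᵀ.mulVec bT = η • g :=
  stmt_11_general d d' k h WT bT WC g η ΔbT hΔbT ΔWC hΔWC horthonormal horth
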